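/- Let E be a real inner product space, n ≥ 1, and g_1, …, g_n ∈ E with average ḡ = (1/n)·∑_{i=1}^n g_i. Suppose ‖g_i − ḡ‖ ≤ ζ for every i. Let S ⊆ {1,…,n} with |S| = m and 1 ≤ m ≤ n. Then ‖(1/m − 1/n)·∑_{i∈S} g_i‖² + ‖(1/n)·∑_{i∉S} g_i‖² ≤ 4·(1 − m/n)²·(ζ² + ‖ḡ‖²). -/

import Mathlib

open Finset

/-- Paper's partial-participation bias bound (Parts 1 and 2 of the ACED / Term B analysis):
under bounded data heterogeneity `‖g i - ḡ‖ ≤ ζ`, for any subset `S` of size `m ≥ 1`,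
`‖(1/m − 1/n) ∑_{i∈S} g i‖² + ‖(1/n) ∑_{i∉S} g i‖² ≤ 4 (1 − m/n)² (ζ² + ‖ḡ‖²)`. -/
theorem partial_participation_bias_bound {E : Type*} [NormedAddCommGroup E]
    [InnerProductSpace ℝ E]
    (n : ℕ) (hn : 1 ≤ n) (ζ : ℝ) (hζ : 0 ≤ ζ)
    (g : Fin n → E) (gbar : E) (hgbar : gbar = (1 / (n : ℝ)) • ∑ i, g i)
    (hbdh : ∀ i, ‖g i - gbar‖ ≤ ζ)
    (S : Finset (Fin n)) (hm : 1 ≤ S.card) :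
    ‖(1 / (S.card : ℝ) - 1 / (n : ℝ)) • ∑ i ∈ S, g i‖ ^ 2 +
        ‖(1 / (n : ℝ)) • ∑ i ∈ Sᶜ, g i‖ ^ 2 ≤
      4 * (1 - (S.card : ℝ) / (n : ℝ)) ^ 2 * (ζ ^ 2 + ‖gbar‖ ^ 2) := by
  have hn' : (0:ℝ) < n := by exact_mod_cast hn
  have hm' : (0:ℝ) < S.card := by exact_mod_cast hm
  have hmn : (S.card:ℝ) ≤ n := by
    exact_mod_cast (S.card_le_univ).trans_eq (by simp)
  have hcompl : (Sᶜ.card : ℝ) = n - S.card := by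
    have h := Finset.card_compl S
    have hle : S.card ≤ n := by exact_mod_cast hmn
    rw [h]
    simp [Nat.cast_sub hle]
  have key : ∀ T : Finset (Fin n),
      ‖∑ i ∈ T, g i - (T.card:ℝ) • gbar‖ ≤ T.card * ζ := by
    intro T
    have heq : ∑ i ∈ T, g i - (T.card:ℝ) • gbar = ∑ i ∈ T, (g i - gbar) := by
      rw [Finset.sum_sub_distrib, Finset.sum_const, Nat.cast_smul_eq_nsmul]
    rw [heq]
    calc ‖∑ i ∈ T, (g i - gbar)‖ ≤ ∑ i ∈ T, ‖g i - gbar‖ := norm_sum_le _ _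
      _ ≤ ∑ _i ∈ T, ζ := Finset.sum_le_sum fun i _ => hbdh i
      _ = T.card * ζ := by rw [Finset.sum_const, nsmul_eq_mul]
  have hnormbd : ∀ T : Finset (Fin n),
      ‖∑ i ∈ T, g i‖ ≤ T.card * ζ + T.card * ‖gbar‖ := by
    intro T
    calc ‖∑ i ∈ T, g i‖
        ≤ ‖∑ i ∈ T, g i - (T.card:ℝ) • gbar‖ + ‖(T.card:ℝ) • gbar‖ :=
          by simpa using norm_add_le (∑ i ∈ T, g i - (T.card:ℝ) • gbar) ((T.card:ℝ) • gbar)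
      _ ≤ T.card * ζ + T.card * ‖gbar‖ := by
          refine add_le_add (key T) ?_
          rw [norm_smul, Real.norm_natCast]
  set a : ℝ := 1 - (S.card:ℝ)/n with ha
  have ha0 : 0 ≤ a := by
    rw [ha]
    have : (S.card:ℝ)/n ≤ 1 := by
      rw [div_le_one hn']; exact hmn
    linarith
  have h1 : ‖(1 / (S.card : ℝ) - 1 / (n : ℝ)) • ∑ i ∈ S, g i‖ ≤ a * (ζ + ‖gbar‖) := by
    rw [norm_smul]
    have hc0 : 0 ≤ 1 / (S.card : ℝ) - 1 / (n : ℝ) := by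
      have := one_div_le_one_div_of_le hm' hmn
      linarith
    rw [Real.norm_eq_abs, abs_of_nonneg hc0]
    calc (1 / (S.card : ℝ) - 1 / (n : ℝ)) * ‖∑ i ∈ S, g i‖
        ≤ (1 / (S.card : ℝ) - 1 / (n : ℝ)) * (S.card * ζ + S.card * ‖gbar‖) :=
          mul_le_mul_of_nonneg_left (hnormbd S) hc0
      _ = a * (ζ + ‖gbar‖) := by
          rw [ha]; field_simp
  have h2 : ‖(1 / (n : ℝ)) • ∑ i ∈ Sᶜ, g i‖ ≤ a * (ζ + ‖gbar‖) := by
    rw [norm_smul]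
    rw [Real.norm_eq_abs, abs_of_nonneg (by positivity : (0:ℝ) ≤ 1/(n:ℝ))]
    calc (1 / (n:ℝ)) * ‖∑ i ∈ Sᶜ, g i‖
        ≤ (1 / (n:ℝ)) * (Sᶜ.card * ζ + Sᶜ.card * ‖gbar‖) :=
          mul_le_mul_of_nonneg_left (hnormbd Sᶜ) (by positivity)
      _ = a * (ζ + ‖gbar‖) := by
          rw [hcompl, ha]; field_simp
  have hb0 : (0:ℝ) ≤ ζ + ‖gbar‖ := by positivity
  have hn1 : ‖(1 / (S.card : ℝ) - 1 / (n : ℝ)) • ∑ i ∈ S, g i‖ ^ 2 ≤ (a * (ζ + ‖gbar‖))^2 :=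
    pow_le_pow_left₀ (norm_nonneg _) h1 2
  have hn2 : ‖(1 / (n : ℝ)) • ∑ i ∈ Sᶜ, g i‖ ^ 2 ≤ (a * (ζ + ‖gbar‖))^2 :=
    pow_le_pow_left₀ (norm_nonneg _) h2 2
  have hfin : 2 * (a * (ζ + ‖gbar‖))^2 ≤ 4 * a^2 * (ζ^2 + ‖gbar‖^2) := by
    nlinarith [sq_nonneg (a * (ζ - ‖gbar‖)), sq_nonneg a]
  have hsum := add_le_add hn1 hn2
  clear_value a
  linarith
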